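/- arXiv:math/0508355 — 2 statements merged into one kernel-verified Lean document; each statement's English description precedes it below -/
import Mathlib

section
/- Let X and Y be Riemannian manifolds and suppose Y ⊆ X is a totally geodesic closed submanifold. If some configuration {y₁, y₂} in Y is insecure in Y, then the configuration {y₁, y₂} is insecure in X. In particular, if Y is insecure then X is insecure. -/
open Set

/-- A curve `γ` is a (local) geodesic on the parameter interval `[a,b]`:
it is locally distance preserving (arclength parametrization). -/
def IsGeodOn {M : Type*} [MetricSpace M] (γ : ℝ → M) (a b : ℝ) : Prop :=
  ∀ t ∈ Set.Icc a b, ∃ ε > 0, ∀ s ∈ Set.Icc a b, ∀ u ∈ Set.Icc a b,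
    |s - t| < ε → |u - t| < ε → dist (γ s) (γ u) = |s - u|

/-- A connecting geodesic for the configuration `{x, y}`: a geodesic segment with
endpoints `x`, `y` not containing `x` or `y` in its interior. -/
def IsConnGeod {M : Type*} [MetricSpace M] (x y : M) (γ : ℝ → M) (a b : ℝ) : Prop :=
  a < b ∧ IsGeodOn γ a b ∧ γ a = x ∧ γ b = y ∧
    ∀ t ∈ Set.Ioo a b, γ t ≠ x ∧ γ t ≠ y

/-- A configuration `{x, y}` is secure if some finite set blocks the interior of
every connecting geodesic from `x` to `y`. -/
def SecureConfig {M : Type*} [MetricSpace M] (x y : M) : Prop :=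
  ∃ F : Finset M, ∀ (γ : ℝ → M) (a b : ℝ), IsConnGeod x y γ a b →
    ∃ t ∈ Set.Ioo a b, γ t ∈ F

/-- A space is secure if every configuration in it is secure. -/
def SecureSpace (M : Type*) [MetricSpace M] : Prop :=
  ∀ x y : M, SecureConfig x y

/-- If `Y` embeds in `X` as a totally geodesic (closed)
submanifold — modelled by an injective map sending geodesics of `Y` to
geodesics of `X` — then insecurity of a configuration `{y₁,y₂}` in `Y` implies
insecurity of its image in `X`; in particular, if `Y` is insecure then so
is `X`. -/
theorem insecure_of_totally_geodesic {X Y : Type*} [MetricSpace X] [MetricSpace Y]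
    (f : Y → X) (hinj : Function.Injective f)
    (hgeod : ∀ (γ : ℝ → Y) (a b : ℝ), IsGeodOn γ a b → IsGeodOn (f ∘ γ) a b) :
    (∀ y₁ y₂ : Y, ¬ SecureConfig y₁ y₂ → ¬ SecureConfig (f y₁) (f y₂)) ∧
    (¬ SecureSpace Y → ¬ SecureSpace X) := by
  have key : ∀ y₁ y₂ : Y, SecureConfig (f y₁) (f y₂) → SecureConfig y₁ y₂ := by
    intro y₁ y₂ ⟨F, hF⟩
    refine ⟨F.preimage f hinj.injOn, ?_⟩
    intro γ a b ⟨hab, hg, ha, hb, hint⟩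
    obtain ⟨t, ht, htF⟩ := hF (f ∘ γ) a b
      ⟨hab, hgeod γ a b hg, by simp [ha], by simp [hb],
        fun t ht => ⟨fun h => (hint t ht).1 (hinj h), fun h => (hint t ht).2 (hinj h)⟩⟩
    exact ⟨t, ht, Finset.mem_preimage.mpr htF⟩
  exact ⟨fun y₁ y₂ h hs => h (key y₁ y₂ hs),
    fun h hs => h fun y₁ y₂ => key y₁ y₂ (hs (f y₁) (f y₂))⟩
end

section
/- Let Y be a compact Riemannian manifold, X a Riemannian manifold, and f : Y → X a local isometry (not necessarily surjective). If Y is insecure, then X is insecure. -/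
open Set

lemma geod_comp {Y X : Type*} [MetricSpace Y] [MetricSpace X] (f : Y → X)
    (hloc : ∀ y : Y, ∃ ε > 0, ∀ a ∈ Metric.ball y ε, ∀ b ∈ Metric.ball y ε,
      dist (f a) (f b) = dist a b)
    (γ : ℝ → Y) (a b : ℝ) (h : IsGeodOn γ a b) : IsGeodOn (f ∘ γ) a b := by
  intro t ht
  obtain ⟨ε, hε, hgeo⟩ := h t ht
  obtain ⟨δ, hδ, hiso⟩ := hloc (γ t)
  refine ⟨min ε δ, lt_min hε hδ, fun s hs u hu hs' hu' => ?_⟩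
  have hball : ∀ r ∈ Set.Icc a b, |r - t| < min ε δ → γ r ∈ Metric.ball (γ t) δ := by
    intro r hr hr'
    rw [Metric.mem_ball,
      hgeo r hr t ht (lt_of_lt_of_le hr' (min_le_left _ _)) (by simpa using hε)]
    exact lt_of_lt_of_le hr' (min_le_right _ _)
  show dist (f (γ s)) (f (γ u)) = |s - u|
  rw [hiso _ (hball s hs hs') _ (hball u hu hu')]
  exact hgeo s hs u hu (lt_of_lt_of_le hs' (min_le_left _ _))
    (lt_of_lt_of_le hu' (min_le_left _ _))

lemma fiber_finite {Y X : Type*} [MetricSpace Y] [MetricSpace X] [CompactSpace Y]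
    (f : Y → X)
    (hloc : ∀ y : Y, ∃ ε > 0, ∀ a ∈ Metric.ball y ε, ∀ b ∈ Metric.ball y ε,
      dist (f a) (f b) = dist a b)
    (x : X) : (f ⁻¹' {x}).Finite := by
  choose ε hε hiso using hloc
  have hcont : Continuous f := by
    rw [Metric.continuous_iff]
    intro y r hr
    refine ⟨min (ε y) r, lt_min (hε y) hr, fun a ha => ?_⟩
    rw [hiso y a (lt_of_lt_of_le ha (min_le_left _ _)) y (by simp [hε y])]
    exact lt_of_lt_of_le ha (min_le_right _ _)
  have hScl : IsClosed (f ⁻¹' {x}) := (isClosed_singleton).preimage hcont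
  have hScp : IsCompact (f ⁻¹' {x}) := hScl.isCompact
  obtain ⟨t, ht⟩ := hScp.elim_finite_subcover (fun y : Y => Metric.ball y (ε y))
    (fun y => Metric.isOpen_ball)
    (fun z _ => Set.mem_iUnion.2 ⟨z, Metric.mem_ball_self (hε z)⟩)
  have : (f ⁻¹' {x}) ⊆ ⋃ y ∈ t, (f ⁻¹' {x}) ∩ Metric.ball y (ε y) := by
    intro z hz
    obtain ⟨y, hy, hzy⟩ := by simpa using ht hz
    exact Set.mem_biUnion hy ⟨hz, hzy⟩
  refine Set.Finite.subset (Set.Finite.biUnion t.finite_toSet fun y _ => ?_) this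
  refine Set.Subsingleton.finite fun p hp q hq => ?_
  have : dist (f p) (f q) = dist p q := hiso y p hp.2 q hq.2
  have hpq : f p = f q := by
    rw [hp.1, hq.1]
  rw [hpq, dist_self] at this
  exact dist_eq_zero.mp this.symm

/-- If `Y` is a compact Riemannian manifold, `X` a Riemannian
manifold, and `f : Y → X` a local isometry (not necessarily surjective), then
insecurity of `Y` implies insecurity of `X`. -/
theorem insecure_of_local_isometry {Y X : Type*} [MetricSpace Y] [MetricSpace X]
    [CompactSpace Y]
    (f : Y → X)
    (hloc : ∀ y : Y, ∃ ε > 0, ∀ a ∈ Metric.ball y ε, ∀ b ∈ Metric.ball y ε,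
      dist (f a) (f b) = dist a b)
    (hins : ¬ SecureSpace Y) :
    ¬ SecureSpace X := by
  intro hX
  apply hins
  intro y1 y2
  obtain ⟨F, hF⟩ := hX (f y1) (f y2)
  have hS : (f ⁻¹' (insert (f y1) (insert (f y2) (↑F : Set X)))).Finite := by
    have hfin : (insert (f y1) (insert (f y2) (↑F : Set X))).Finite :=
      ((F.finite_toSet).insert _).insert _
    have heq : f ⁻¹' (insert (f y1) (insert (f y2) (↑F : Set X)))
        = ⋃ x ∈ insert (f y1) (insert (f y2) (↑F : Set X)), f ⁻¹' {x} := by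
      ext z; simp
    rw [heq]
    exact Set.Finite.biUnion hfin fun x _ => fiber_finite f hloc x
  refine ⟨hS.toFinset, ?_⟩
  rintro γ a b ⟨hab, hgeo, ha, hb, hint⟩
  by_cases hmid : ∃ t ∈ Set.Ioo a b, f (γ t) = f y1 ∨ f (γ t) = f y2
  · obtain ⟨t, ht, h⟩ := hmid
    refine ⟨t, ht, ?_⟩
    rw [Set.Finite.mem_toFinset]
    rcases h with h | h <;> simp [h]
  · push_neg at hmid
    have hconn : IsConnGeod (f y1) (f y2) (f ∘ γ) a b :=
      ⟨hab, geod_comp f hloc γ a b hgeo, by simp [ha], by simp [hb],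
        fun t ht => ⟨(hmid t ht).1, (hmid t ht).2⟩⟩
    obtain ⟨t, ht, htF⟩ := hF _ _ _ hconn
    refine ⟨t, ht, ?_⟩
    rw [Set.Finite.mem_toFinset]
    simp only [Function.comp] at htF
    simp [htF]
end
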